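/- arXiv:1811.06116 — 2 statements merged into one kernel-verified Lean document; each statement's English description precedes it below -/
import Mathlib

section
/- Assume L is nonresonant in the Neumann space X_{N,T} with Green's function G_N[T], and L̃ is nonresonant in the Neumann space X_{N,2T} with Green's function G_N[2T]. Then G_N[T](t,s) = G_N[2T](t,s) + G_N[2T](2T − t, s) for all (t,s) ∈ I × I. -/
open MeasureTheory Set

/-- `u` belongs to the space `W^{m,1}([0,T])`: it is of class `C^{m-1}` on `[0,T]` and
its `(m-1)`-st derivative is absolutely continuous, expressed via the fundamental
theorem of calculus with an integrable `m`-th derivative. -/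
def MemW (m : ℕ) (T : ℝ) (u : ℝ → ℝ) : Prop :=
  (∀ k < m, ContinuousOn (iteratedDeriv k u) (Icc 0 T)) ∧
  IntervalIntegrable (iteratedDeriv m u) volume 0 T ∧
  ∀ t ∈ Icc 0 T,
    iteratedDeriv (m - 1) u t
      = iteratedDeriv (m - 1) u 0 + ∫ s in (0:ℝ)..t, iteratedDeriv m u s

/-- The `2n`-th order linear differential operator
`L u = u^{(2n)} + a_{2n-1} u^{(2n-1)} + ⋯ + a_1 u' + a_0 u`. -/
noncomputable def Lop (n : ℕ) (a : ℕ → ℝ → ℝ) (u : ℝ → ℝ) (t : ℝ) : ℝ :=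
  iteratedDeriv (2 * n) u t + ∑ k ∈ Finset.range (2 * n), a k t * iteratedDeriv k u t

/-- Neumann space on `[0,T]`. -/
def XN (n : ℕ) (T : ℝ) : Set (ℝ → ℝ) :=
  {u | MemW (2 * n) T u ∧ ∀ k < n,
    iteratedDeriv (2 * k + 1) u 0 = 0 ∧ iteratedDeriv (2 * k + 1) u T = 0}

/-- Dirichlet space on `[0,T]`. -/
def XD (n : ℕ) (T : ℝ) : Set (ℝ → ℝ) :=
  {u | MemW (2 * n) T u ∧ ∀ k < n,
    iteratedDeriv (2 * k) u 0 = 0 ∧ iteratedDeriv (2 * k) u T = 0}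

/-- Mixed space 1 on `[0,T]`. -/
def XM1 (n : ℕ) (T : ℝ) : Set (ℝ → ℝ) :=
  {u | MemW (2 * n) T u ∧ ∀ k < n,
    iteratedDeriv (2 * k + 1) u 0 = 0 ∧ iteratedDeriv (2 * k) u T = 0}

/-- Mixed space 2 on `[0,T]`. -/
def XM2 (n : ℕ) (T : ℝ) : Set (ℝ → ℝ) :=
  {u | MemW (2 * n) T u ∧ ∀ k < n,
    iteratedDeriv (2 * k) u 0 = 0 ∧ iteratedDeriv (2 * k + 1) u T = 0}

/-- Periodic space on `[0,T]`. -/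
def XP (n : ℕ) (T : ℝ) : Set (ℝ → ℝ) :=
  {u | MemW (2 * n) T u ∧ ∀ k < 2 * n, iteratedDeriv k u 0 = iteratedDeriv k u T}

/-- Antiperiodic space on `[0,T]`. -/
def XA (n : ℕ) (T : ℝ) : Set (ℝ → ℝ) :=
  {u | MemW (2 * n) T u ∧ ∀ k < 2 * n, iteratedDeriv k u 0 = -iteratedDeriv k u T}

/-- The operator `Lop n a` is nonresonant in `X`: the only solution in `X` of the
homogeneous equation (a.e. on `[0,T]`) is the trivial one. -/
def Nonresonant (n : ℕ) (a : ℕ → ℝ → ℝ) (T : ℝ) (X : Set (ℝ → ℝ)) : Prop :=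
  ∀ u ∈ X, (∀ᵐ t ∂volume, t ∈ Icc 0 T → Lop n a u t = 0) →
    ∀ t ∈ Icc 0 T, u t = 0

/-- `G` is the Green's function of `(Lop n a, X)` on `[0,T]`: it is continuous on the
square and, for every `σ ∈ L¹(0,T)`, `t ↦ ∫₀ᵀ G t s σ s ds` is the unique solution in
`X` of `L u = σ` a.e. on `[0,T]`. -/
def IsGreen (n : ℕ) (a : ℕ → ℝ → ℝ) (T : ℝ) (X : Set (ℝ → ℝ)) (G : ℝ → ℝ → ℝ) : Prop :=
  ContinuousOn (fun p : ℝ × ℝ => G p.1 p.2) (Icc 0 T ×ˢ Icc 0 T) ∧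
  ∀ σ : ℝ → ℝ, IntervalIntegrable σ volume 0 T →
    ((fun t => ∫ s in (0:ℝ)..T, G t s * σ s) ∈ X ∧
     (∀ᵐ t ∂volume, t ∈ Icc 0 T →
        Lop n a (fun t' => ∫ s in (0:ℝ)..T, G t' s * σ s) t = σ t) ∧
     ∀ v ∈ X, (∀ᵐ t ∂volume, t ∈ Icc 0 T → Lop n a v t = σ t) →
       ∀ t ∈ Icc 0 T, v t = ∫ s in (0:ℝ)..T, G t s * σ s)

/-- Coefficients of the extended operator `L̃` on `[0,2T]`: the even-order coefficients
are extended evenly about `t = T`, the odd-order ones oddly. -/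
noncomputable def tildeCoef (T : ℝ) (a : ℕ → ℝ → ℝ) : ℕ → ℝ → ℝ :=
  fun k t => if t ≤ T then a k t else (-1 : ℝ) ^ k * a k (2 * T - t)

/-- Coefficients of the reflected operator `Ľ`:
`Ľ u = u^{(2n)} + Σ (-1)^k a_k(T - t) u^{(k)}`. -/
noncomputable def checkCoef (T : ℝ) (a : ℕ → ℝ → ℝ) : ℕ → ℝ → ℝ :=
  fun k t => (-1 : ℝ) ^ k * a k (T - t)

/-- `u` is an eigenfunction of `Lop n a` in `X` associated to the eigenvalue `lam`:
`u ∈ X`, `u` is not identically zero on `[0,T]`, and `L u + lam u = 0` a.e. on `[0,T]`. -/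
def IsEigenfun (n : ℕ) (a : ℕ → ℝ → ℝ) (T : ℝ) (X : Set (ℝ → ℝ)) (lam : ℝ)
    (u : ℝ → ℝ) : Prop :=
  u ∈ X ∧ (∃ t ∈ Icc 0 T, u t ≠ 0) ∧
  ∀ᵐ t ∂volume, t ∈ Icc 0 T → Lop n a u t + lam * u t = 0

/-- The set of eigenvalues (the spectrum) of `Lop n a` in `X`. -/
def SpecSet (n : ℕ) (a : ℕ → ℝ → ℝ) (T : ℝ) (X : Set (ℝ → ℝ)) : Set ℝ :=
  {lam | ∃ u, IsEigenfun n a T X lam u}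

/-- `lam0` is the smallest eigenvalue of `Lop n a` in `X`, it is simple (its
eigenfunctions form a one-dimensional space), and it admits an eigenfunction which is
strictly positive on the interior of the interval. -/
def IsPrincipal (n : ℕ) (a : ℕ → ℝ → ℝ) (T : ℝ) (X : Set (ℝ → ℝ)) (lam0 : ℝ) : Prop :=
  lam0 ∈ SpecSet n a T X ∧
  (∀ mu ∈ SpecSet n a T X, lam0 ≤ mu) ∧
  (∀ u v, IsEigenfun n a T X lam0 u → IsEigenfun n a T X lam0 v →
      ∃ c : ℝ, ∀ t ∈ Icc 0 T, v t = c * u t) ∧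
  ∃ u, IsEigenfun n a T X lam0 u ∧ ∀ t ∈ Ioo 0 T, 0 < u t


private lemma iterDeriv_reflect (c : ℝ) (f : ℝ → ℝ) (k : ℕ) (x : ℝ) :
    iteratedDeriv k (fun t => f (c - t)) x = (-1 : ℝ) ^ k * iteratedDeriv k f (c - x) := by
  induction k generalizing x with
  | zero => simp
  | succ k ih =>
    have ih' : (iteratedDeriv k fun t => f (c - t))
        = fun x => (-1 : ℝ) ^ k * iteratedDeriv k f (c - x) := funext ih
    rw [iteratedDeriv_succ, ih', deriv_const_mul_field, deriv_comp_const_sub,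
      iteratedDeriv_succ, pow_succ]
    ring

private lemma tilde_reflect (T : ℝ) (a : ℕ → ℝ → ℝ) (k : ℕ) {t : ℝ} (ht : t ≠ T) :
    tildeCoef T a k (2 * T - t) = (-1 : ℝ) ^ k * tildeCoef T a k t := by
  by_cases htle : t ≤ T
  · have h1 : t < T := lt_of_le_of_ne htle ht
    have h2 : ¬(2 * T - t ≤ T) := by simp only [not_le]; linarith
    simp [tildeCoef, htle, h2, sub_sub_cancel]
  · have h2 : 2 * T - t ≤ T := by push_neg at htle; linarith
    have h3 : ((-1 : ℝ) ^ k) * ((-1 : ℝ) ^ k) = 1 := by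
      rw [← pow_add]
      exact Even.neg_one_pow ⟨k, rfl⟩
    simp only [tildeCoef, if_pos h2, if_neg htle]
    rw [← mul_assoc, h3, one_mul]

theorem green_neumann_neumann (n : ℕ) (hn : 1 ≤ n) (T : ℝ) (hT : 0 < T)
    (a : ℕ → ℝ → ℝ) (ha : ∀ k < 2 * n, IntervalIntegrable (a k) volume 0 T)
    (GN GN2 : ℝ → ℝ → ℝ)
    (hNres : Nonresonant n a T (XN n T))
    (hGN : IsGreen n a T (XN n T) GN)
    (hN2res : Nonresonant n (tildeCoef T a) (2 * T) (XN n (2 * T)))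
    (hGN2 : IsGreen n (tildeCoef T a) (2 * T) (XN n (2 * T)) GN2) :
    ∀ t ∈ Icc 0 T, ∀ s ∈ Icc 0 T,
      GN t s = GN2 t s + GN2 (2 * T - t) s := by
  have hT2pos : (0:ℝ) < 2 * T := by linarith
  have hTle : T ≤ 2 * T := by linarith
  have hsubIcc : Icc (0:ℝ) T ⊆ Icc 0 (2 * T) := Icc_subset_Icc le_rfl hTle
  have hmap : ∀ x ∈ Icc (0:ℝ) (2 * T), 2 * T - x ∈ Icc (0:ℝ) (2 * T) := by
    intro x hx
    simp only [mem_Icc] at hx ⊢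
    constructor <;> linarith [hx.1, hx.2]
  have huIcc01 : uIcc (0:ℝ) T ⊆ uIcc 0 (2 * T) := by
    rw [uIcc_of_le hT.le, uIcc_of_le hT2pos.le]; exact hsubIcc
  have huIccT2 : uIcc T (2 * T) ⊆ uIcc 0 (2 * T) := by
    rw [uIcc_of_le hTle, uIcc_of_le hT2pos.le]; exact Icc_subset_Icc hT.le le_rfl
  have secCont : ∀ t ∈ Icc (0:ℝ) (2 * T), ContinuousOn (fun s => GN2 t s) (Icc 0 (2 * T)) := by
    intro t ht
    exact hGN2.1.comp ((continuous_const.prodMk continuous_id).continuousOn)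
      (fun s hs => mk_mem_prod ht hs)
  have haT : ∀ᵐ t : ℝ ∂volume, t ≠ T := by
    have h1 : {t : ℝ | ¬ t ≠ T} = {T} := by ext x; simp
    rw [MeasureTheory.ae_iff, h1]
    exact Real.volume_singleton
  -- Key identity
  have key : ∀ σ : ℝ → ℝ, IntervalIntegrable σ volume 0 T → ∀ t ∈ Icc (0:ℝ) T,
      (∫ s in (0:ℝ)..T, GN t s * σ s)
        = ∫ s in (0:ℝ)..T, (GN2 t s + GN2 (2 * T - t) s) * σ s := by
    intro σ hσ
    set σt : ℝ → ℝ := fun s => if s ≤ T then σ s else 0 with hσt_def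
    set σh : ℝ → ℝ := fun s => σt (2 * T - s) with hσh_def
    set σ2 : ℝ → ℝ := fun s => σt s + σh s with hσ2_def
    have hσtT : IntervalIntegrable σt volume 0 T := by
      refine hσ.congr ?_
      intro s hs
      rw [uIoc_of_le hT.le] at hs
      simp [hσt_def, hs.2]
    have hσtT2 : IntervalIntegrable σt volume T (2 * T) := by
      refine (intervalIntegrable_const (c := (0:ℝ))).congr ?_
      intro s hs
      rw [uIoc_of_le hTle] at hs
      simp [hσt_def, not_le.mpr hs.1]
    have hσt2 : IntervalIntegrable σt volume 0 (2 * T) := hσtT.trans hσtT2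
    have hσh2 : IntervalIntegrable σh volume 0 (2 * T) := by
      have h := (hσt2.comp_sub_left (2 * T)).symm
      rw [hσh_def]
      simpa using h
    have hσ22 : IntervalIntegrable σ2 volume 0 (2 * T) := hσt2.add hσh2
    obtain ⟨huX, huL, -⟩ := hGN2.2 σt hσt2
    obtain ⟨-, -, hvU⟩ := hGN2.2 σh hσh2
    obtain ⟨hwX, hwL, -⟩ := hGN2.2 σ2 hσ22
    set u : ℝ → ℝ := fun t => ∫ s in (0:ℝ)..2 * T, GN2 t s * σt s with hu_def
    set w : ℝ → ℝ := fun t => ∫ s in (0:ℝ)..2 * T, GN2 t s * σ2 s with hw_def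
    obtain ⟨⟨huC, huI, huFTC⟩, huBC⟩ := huX
    have hud : ∀ (k : ℕ) (x : ℝ), iteratedDeriv k (fun x => u (2 * T - x)) x
        = (-1 : ℝ) ^ k * iteratedDeriv k u (2 * T - x) := fun k x => iterDeriv_reflect _ u k x
    have hudF : ∀ k : ℕ, iteratedDeriv k (fun x => u (2 * T - x))
        = fun x => (-1 : ℝ) ^ k * iteratedDeriv k u (2 * T - x) := fun k => funext (hud k)
    have hEven : ((-1 : ℝ)) ^ (2 * n) = 1 := Even.neg_one_pow ⟨n, two_mul n⟩
    have hOdd : ((-1 : ℝ)) ^ (2 * n - 1) = -1 := Odd.neg_one_pow ⟨n - 1, by omega⟩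
    -- the reflection of u belongs to the Neumann space on [0, 2T]
    have hutX : (fun x => u (2 * T - x)) ∈ XN n (2 * T) := by
      refine ⟨⟨?_, ?_, ?_⟩, ?_⟩
      · intro k hk
        rw [hudF k]
        exact continuousOn_const.mul ((huC k hk).comp
          ((continuous_const.sub continuous_id).continuousOn) (fun x hx => hmap x hx))
      · rw [hudF (2 * n)]
        have h := (huI.comp_sub_left (2 * T)).symm
        have h2 : IntervalIntegrable (fun x => iteratedDeriv (2 * n) u (2 * T - x))
            volume 0 (2 * T) := by simpa using h
        exact h2.const_mul _
      · intro t ht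
        rw [hud (2 * n - 1) t, hud (2 * n - 1) 0]
        have hcongr : (∫ s in (0:ℝ)..t, iteratedDeriv (2 * n) (fun x => u (2 * T - x)) s)
            = ∫ s in (0:ℝ)..t, iteratedDeriv (2 * n) u (2 * T - s) := by
          refine intervalIntegral.integral_congr fun s _ => ?_
          rw [hud (2 * n) s, hEven, one_mul]
        rw [hcongr, intervalIntegral.integral_comp_sub_left (iteratedDeriv (2 * n) u) (2 * T)]
        rw [hOdd, sub_zero]
        have hmemt : 2 * T - t ∈ Icc (0:ℝ) (2 * T) := hmap t ht
        have e1 := huFTC (2 * T - t) hmemt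
        have e2 := huFTC (2 * T) (right_mem_Icc.mpr hT2pos.le)
        have hs1 : uIcc (0:ℝ) (2 * T - t) ⊆ uIcc 0 (2 * T) := by
          rw [uIcc_of_le hmemt.1, uIcc_of_le hT2pos.le]
          exact Icc_subset_Icc le_rfl hmemt.2
        have hs2 : uIcc (2 * T - t) (2 * T) ⊆ uIcc (0:ℝ) (2 * T) := by
          rw [uIcc_of_le hmemt.2, uIcc_of_le hT2pos.le]
          exact Icc_subset_Icc hmemt.1 le_rfl
        have hadd := intervalIntegral.integral_add_adjacent_intervals
          (huI.mono_set hs1) (huI.mono_set hs2)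
        simp only [neg_one_mul]
        linarith
      · intro k hk
        constructor
        · rw [hud (2 * k + 1) 0, sub_zero, (huBC k hk).2, mul_zero]
        · rw [hud (2 * k + 1) (2 * T), sub_self, (huBC k hk).1, mul_zero]
    -- the reflection of u satisfies the reflected equation
    have hutL : ∀ᵐ t ∂volume, t ∈ Icc (0:ℝ) (2 * T) →
        Lop n (tildeCoef T a) (fun x => u (2 * T - x)) t = σh t := by
      have hrefl := ((Measure.measurePreserving_sub_left (volume : Measure ℝ)
        (2 * T)).quasiMeasurePreserving.tendsto_ae).eventually huL
      filter_upwards [hrefl, haT] with t h1 h2 ht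
      have hmt : 2 * T - t ∈ Icc (0:ℝ) (2 * T) := hmap t ht
      have h3 := h1 hmt
      simp only [Lop] at h3 ⊢
      have hsum : ∀ k ∈ Finset.range (2 * n),
          tildeCoef T a k t * iteratedDeriv k (fun x => u (2 * T - x)) t
            = tildeCoef T a k (2 * T - t) * iteratedDeriv k u (2 * T - t) := by
        intro k _
        rw [hud k t, tilde_reflect T a k h2]
        ring
      rw [hud (2 * n) t, hEven, one_mul, Finset.sum_congr rfl hsum, h3, hσh_def]
    have hveq : ∀ t ∈ Icc (0:ℝ) (2 * T),
        u (2 * T - t) = ∫ s in (0:ℝ)..2 * T, GN2 t s * σh s := by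
      intro t ht
      simpa using hvU (fun x => u (2 * T - x)) hutX hutL t ht
    -- w is the symmetrization of u
    have hw_sum : ∀ t ∈ Icc (0:ℝ) (2 * T), w t = u t + u (2 * T - t) := by
      intro t ht
      have h1 : IntervalIntegrable (fun s => GN2 t s * σt s) volume 0 (2 * T) :=
        hσt2.continuousOn_mul (by rw [uIcc_of_le hT2pos.le]; exact secCont t ht)
      have h2 : IntervalIntegrable (fun s => GN2 t s * σh s) volume 0 (2 * T) :=
        hσh2.continuousOn_mul (by rw [uIcc_of_le hT2pos.le]; exact secCont t ht)
      have hc : w t = ∫ s in (0:ℝ)..2 * T, (GN2 t s * σt s + GN2 t s * σh s) := by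
        simp only [hw_def, hσ2_def]
        exact intervalIntegral.integral_congr fun s _ => by ring
      rw [hc, intervalIntegral.integral_add h1 h2, hveq t ht, hu_def]
    have hw_refl : ∀ x ∈ Icc (0:ℝ) (2 * T), w x = w (2 * T - x) := by
      intro x hx
      rw [hw_sum x hx, hw_sum _ (hmap x hx), sub_sub_cancel, add_comm]
    obtain ⟨⟨hwC, hwI, hwFTC⟩, hwBC⟩ := hwX
    -- w restricted to [0, T] lies in the Neumann space there
    have hwXT : w ∈ XN n T := by
      refine ⟨⟨fun k hk => (hwC k hk).mono hsubIcc, hwI.mono_set huIcc01,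
        fun t ht => hwFTC t (hsubIcc ht)⟩, ?_⟩
      intro k hk
      refine ⟨(hwBC k hk).1, ?_⟩
      have hevenW : w =ᶠ[nhds T] fun x => w (2 * T - x) := by
        filter_upwards [Ioo_mem_nhds hT (by linarith : T < 2 * T)] with x hx
        exact hw_refl x (Ioo_subset_Icc_self hx)
      have h1 := Filter.EventuallyEq.iteratedDeriv_eq (2 * k + 1) hevenW
      have h2 := iterDeriv_reflect (2 * T) w (2 * k + 1) T
      have h3 : 2 * T - T = T := by ring
      rw [h3] at h2
      rw [h2, Odd.neg_one_pow ⟨k, rfl⟩, neg_one_mul] at h1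
      linarith
    -- w solves the original equation on [0, T]
    have hwODE : ∀ᵐ t ∂volume, t ∈ Icc (0:ℝ) T → Lop n a w t = σ t := by
      filter_upwards [hwL, haT] with t h1 h2 ht
      have ht2 : t ∈ Icc (0:ℝ) (2 * T) := hsubIcc ht
      have h3 := h1 ht2
      have htlt : t < T := lt_of_le_of_ne ht.2 h2
      have hσval : σ2 t = σ t := by
        have hnle : ¬(2 * T - t ≤ T) := by simp only [not_le]; linarith
        simp only [hσ2_def, hσh_def, hσt_def]
        rw [if_pos ht.2, if_neg hnle, add_zero]
      have hLop : Lop n a w t = Lop n (tildeCoef T a) w t := by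
        simp only [Lop]
        congr 1
        refine Finset.sum_congr rfl fun k _ => ?_
        simp [tildeCoef, ht.2]
      rw [hLop, h3, hσval]
    have hwT := (hGN.2 σ hσ).2.2 w hwXT hwODE
    -- split formula for u
    have hsplit : ∀ t' ∈ Icc (0:ℝ) (2 * T),
        u t' = ∫ s in (0:ℝ)..T, GN2 t' s * σ s := by
      intro t' ht'
      have hIfull : IntervalIntegrable (fun s => GN2 t' s * σt s) volume 0 (2 * T) :=
        hσt2.continuousOn_mul (by rw [uIcc_of_le hT2pos.le]; exact secCont t' ht')
      have h12 := intervalIntegral.integral_add_adjacent_intervals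
        (hIfull.mono_set huIcc01) (hIfull.mono_set huIccT2)
      have hzero : (∫ s in T..(2 * T), GN2 t' s * σt s) = 0 := by
        have hae : ∀ᵐ s ∂volume, s ∈ uIoc T (2 * T) → GN2 t' s * σt s = (0:ℝ) := by
          refine ae_of_all _ fun s hs => ?_
          rw [uIoc_of_le hTle] at hs
          simp [hσt_def, not_le.mpr hs.1]
        rw [intervalIntegral.integral_congr_ae hae]
        simp
      have hfirst : (∫ s in (0:ℝ)..T, GN2 t' s * σt s)
          = ∫ s in (0:ℝ)..T, GN2 t' s * σ s := by
        refine intervalIntegral.integral_congr fun s hs => ?_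
        rw [uIcc_of_le hT.le] at hs
        simp [hσt_def, hs.2]
      have hfin : (∫ s in (0:ℝ)..2 * T, GN2 t' s * σt s)
          = ∫ s in (0:ℝ)..T, GN2 t' s * σ s := by
        rw [← h12, hzero, add_zero, hfirst]
      rw [hu_def]
      exact hfin
    intro t ht
    have ht2 : t ∈ Icc (0:ℝ) (2 * T) := hsubIcc ht
    have e1 := hwT t ht
    have e2 := hw_sum t ht2
    have e3 := hsplit t ht2
    have e4 := hsplit (2 * T - t) (hmap t ht2)
    have hA : IntervalIntegrable (fun s => GN2 t s * σ s) volume 0 T :=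
      hσ.continuousOn_mul (by
        rw [uIcc_of_le hT.le]; exact (secCont t ht2).mono hsubIcc)
    have hB : IntervalIntegrable (fun s => GN2 (2 * T - t) s * σ s) volume 0 T :=
      hσ.continuousOn_mul (by
        rw [uIcc_of_le hT.le]; exact (secCont _ (hmap t ht2)).mono hsubIcc)
    rw [← e1, e2, e3, e4, ← intervalIntegral.integral_add hA hB]
    exact intervalIntegral.integral_congr fun s _ => by ring
  -- conclude by a density/positivity argument
  intro t ht
  set K : ℝ → ℝ := fun s => GN t s - (GN2 t s + GN2 (2 * T - t) s) with hK_def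
  have ht2 : t ∈ Icc (0:ℝ) (2 * T) := hsubIcc ht
  have c1 : ContinuousOn (fun s => GN t s) (Icc 0 T) :=
    hGN.1.comp ((continuous_const.prodMk continuous_id).continuousOn)
      (fun s hs => mk_mem_prod ht hs)
  have c2 : ContinuousOn (fun s => GN2 t s) (Icc 0 T) := (secCont t ht2).mono hsubIcc
  have c3 : ContinuousOn (fun s => GN2 (2 * T - t) s) (Icc 0 T) :=
    (secCont _ (hmap t ht2)).mono hsubIcc
  have hKc : ContinuousOn K (Icc 0 T) := c1.sub (c2.add c3)
  have hKi : IntervalIntegrable K volume 0 T :=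
    ContinuousOn.intervalIntegrable (by rw [uIcc_of_le hT.le]; exact hKc)
  have hkey := key K hKi t ht
  have hA : IntervalIntegrable (fun s => GN t s * K s) volume 0 T :=
    hKi.continuousOn_mul (by rw [uIcc_of_le hT.le]; exact c1)
  have hB : IntervalIntegrable (fun s => (GN2 t s + GN2 (2 * T - t) s) * K s) volume 0 T :=
    hKi.continuousOn_mul (by rw [uIcc_of_le hT.le]; exact c2.add c3)
  have hzero : (∫ s in (0:ℝ)..T, K s * K s) = 0 := by
    have hc : (∫ s in (0:ℝ)..T, K s * K s)
        = ∫ s in (0:ℝ)..T, (GN t s * K s - (GN2 t s + GN2 (2 * T - t) s) * K s) := by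
      refine intervalIntegral.integral_congr fun s _ => ?_
      simp only [hK_def]
      ring
    rw [hc, intervalIntegral.integral_sub hA hB, hkey, sub_self]
  intro s hs
  by_contra hne
  have hKs : K s ≠ 0 := sub_ne_zero_of_ne hne
  have hpos : 0 < ∫ x in (0:ℝ)..T, K x * K x := by
    refine intervalIntegral.integral_pos hT (hKc.mul hKc) (fun x _ => mul_self_nonneg _) ?_
    exact ⟨s, hs, mul_self_pos.mpr hKs⟩
  linarith
end

section
/- Assume L is nonresonant in the mixed space X_{M2,T} with Green's function G_{M2}[T], and L̃ is nonresonant in the antiperiodic space X_{A,2T} with Green's function G_A[2T]. Then G_{M2}[T](t,s) = G_A[2T](t,s) + G_A[2T](2T − t, s) for all (t,s) ∈ I × I. -/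
open MeasureTheory Set

lemma reflect_iteratedDeriv (u : ℝ → ℝ) (c : ℝ) : ∀ (k : ℕ) (t : ℝ),
    iteratedDeriv k (fun x => u (c - x)) t = (-1:ℝ)^k * iteratedDeriv k u (c - t) := by
  intro k
  induction k with
  | zero => intro t; simp
  | succ k ih =>
    intro t
    rw [iteratedDeriv_succ]
    have h1 : (iteratedDeriv k fun x => u (c - x))
        = fun x => (-1:ℝ)^k * iteratedDeriv k u (c - x) := funext ih
    rw [h1, deriv_const_mul_field, deriv_comp_const_sub, iteratedDeriv_succ]
    ring

lemma iteratedDeriv_eqOn_Ioo {f g : ℝ → ℝ} {a b : ℝ} (h : ∀ t ∈ Ioo a b, f t = g t) :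
    ∀ (k : ℕ), ∀ t ∈ Ioo a b, iteratedDeriv k f t = iteratedDeriv k g t := by
  intro k
  induction k with
  | zero => simpa using h
  | succ k ih =>
    intro t ht
    rw [iteratedDeriv_succ, iteratedDeriv_succ]
    have : iteratedDeriv k f =ᶠ[nhds t] iteratedDeriv k g :=
      Filter.eventuallyEq_of_mem (isOpen_Ioo.mem_nhds ht) ih
    exact this.deriv_eq

lemma eqOn_Icc_of_Ioo {f g : ℝ → ℝ} {a b : ℝ} (hab : a < b)
    (hf : ContinuousOn f (Icc a b)) (hg : ContinuousOn g (Icc a b))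
    (h : ∀ t ∈ Ioo a b, f t = g t) : ∀ t ∈ Icc a b, f t = g t := by
  intro t ht
  have hne : (nhdsWithin t (Ioo a b)).NeBot := by
    rw [← mem_closure_iff_nhdsWithin_neBot, closure_Ioo hab.ne]; exact ht
  have h1 : Filter.Tendsto f (nhdsWithin t (Ioo a b)) (nhds (f t)) :=
    (hf t ht).mono Ioo_subset_Icc_self
  have h2 : Filter.Tendsto g (nhdsWithin t (Ioo a b)) (nhds (g t)) :=
    (hg t ht).mono Ioo_subset_Icc_self
  have h3 : Filter.Tendsto f (nhdsWithin t (Ioo a b)) (nhds (g t)) :=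
    h2.congr' (Filter.eventuallyEq_of_mem self_mem_nhdsWithin fun x hx => (h x hx).symm)
  exact tendsto_nhds_unique h1 h3

lemma ae_reflect {c : ℝ} {P : ℝ → Prop} (h : ∀ᵐ t ∂(volume : Measure ℝ), P t) :
    ∀ᵐ t ∂(volume : Measure ℝ), P (c - t) :=
  ((Measure.measurePreserving_sub_left volume c).quasiMeasurePreserving.tendsto_ae).eventually h

lemma ae_ne_point (T : ℝ) : ∀ᵐ t ∂(volume : Measure ℝ), t ≠ T := by
  have h : {t : ℝ | ¬ t ≠ T} = {T} := by ext x; simp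
  rw [ae_iff, h]; exact measure_singleton T

lemma tildeCoef_reflect (T : ℝ) (a : ℕ → ℝ → ℝ) (k : ℕ) {t : ℝ} (ht : t ≠ T) :
    tildeCoef T a k (2*T - t) = (-1:ℝ)^k * tildeCoef T a k t := by
  unfold tildeCoef
  rcases lt_or_gt_of_ne ht with h | h
  · rw [if_neg (by intro hle; linarith), if_pos h.le]
    have e : 2*T - (2*T - t) = t := by ring
    rw [e]
  · rw [if_pos (by linarith), if_neg (not_le.mpr h)]
    rw [← mul_assoc, ← pow_add]
    rw [Even.neg_one_pow ⟨k, rfl⟩, one_mul]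

lemma MemW_reflect {m : ℕ} (hm : 1 ≤ m) {c : ℝ} (hc : 0 ≤ c) {u : ℝ → ℝ}
    (hu : MemW m c u) : MemW m c (fun x => u (c - x)) := by
  obtain ⟨hcont, hint, hftc⟩ := hu
  have hrefl : ∀ k : ℕ, iteratedDeriv k (fun x => u (c - x))
      = fun t => (-1:ℝ)^k * iteratedDeriv k u (c - t) :=
    fun k => funext (reflect_iteratedDeriv u c k)
  have hmaps : MapsTo (fun t : ℝ => c - t) (Icc 0 c) (Icc 0 c) := by
    intro t ht
    simp only [mem_Icc] at ht ⊢
    constructor <;> linarith [ht.1, ht.2]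
  refine ⟨?_, ?_, ?_⟩
  · intro k hk
    rw [hrefl k]
    exact continuousOn_const.mul
      ((hcont k hk).comp (continuousOn_const.sub continuousOn_id) hmaps)
  · rw [hrefl m]
    have h2 : IntervalIntegrable (fun x => iteratedDeriv m u (c - x)) volume 0 c := by
      simpa using (hint.comp_sub_left c).symm
    exact h2.const_mul _
  · intro t ht
    rw [hrefl (m-1), hrefl m]
    have hsub : ∀ x ∈ Icc (0:ℝ) c, IntervalIntegrable (iteratedDeriv m u) volume 0 x := by
      intro x hx
      apply hint.mono_set
      rw [uIcc_of_le hx.1, uIcc_of_le hc]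
      exact Icc_subset_Icc le_rfl hx.2
    have hct : c - t ∈ Icc (0:ℝ) c := ⟨by linarith [ht.2], by linarith [ht.1]⟩
    have e1 : (∫ s in (0:ℝ)..t, (-1:ℝ)^m * iteratedDeriv m u (c - s))
        = (-1:ℝ)^m * ∫ s in (c-t)..(c-0), iteratedDeriv m u s := by
      rw [intervalIntegral.integral_const_mul, intervalIntegral.integral_comp_sub_left]
    have e2 : (∫ s in (c-t)..c, iteratedDeriv m u s)
        = (∫ s in (0:ℝ)..c, iteratedDeriv m u s)
          - ∫ s in (0:ℝ)..(c-t), iteratedDeriv m u s :=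
      (intervalIntegral.integral_interval_sub_left hint (hsub (c-t) hct)).symm
    have hgc := hftc c ⟨hc, le_refl c⟩
    have hgct := hftc (c - t) hct
    rw [e1, sub_zero, e2]
    obtain ⟨m', rfl⟩ : ∃ m', m = m' + 1 := ⟨m-1, (Nat.succ_pred_eq_of_pos hm).symm⟩
    simp only [Nat.add_sub_cancel] at *
    rw [pow_succ]
    simp only [sub_zero]
    linear_combination ((-1:ℝ)^m') * hgct - ((-1:ℝ)^m') * hgc

lemma XA_reflect {n : ℕ} (hn : 1 ≤ n) {c : ℝ} (hc : 0 ≤ c) {u : ℝ → ℝ}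
    (hu : u ∈ XA n c) : (fun x => u (c - x)) ∈ XA n c := by
  refine ⟨MemW_reflect (by omega) hc hu.1, ?_⟩
  intro k hk
  rw [reflect_iteratedDeriv, reflect_iteratedDeriv, sub_zero, sub_self]
  have h := hu.2 k hk
  rw [h]
  ring

lemma Lop_reflect (n : ℕ) (T : ℝ) (a : ℕ → ℝ → ℝ) (u : ℝ → ℝ) {t : ℝ} (ht : t ≠ T) :
    Lop n (tildeCoef T a) (fun x => u (2*T - x)) t = Lop n (tildeCoef T a) u (2*T - t) := by
  unfold Lop
  rw [reflect_iteratedDeriv, Even.neg_one_pow ⟨n, by ring⟩, one_mul]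
  congr 1
  apply Finset.sum_congr rfl
  intro k hk
  rw [reflect_iteratedDeriv, tildeCoef_reflect T a k ht]
  ring

lemma green_key (n : ℕ) (hn : 1 ≤ n) (T : ℝ) (hT : 0 < T)
    (a : ℕ → ℝ → ℝ) (GM2 GA : ℝ → ℝ → ℝ)
    (hGM2 : IsGreen n a T (XM2 n T) GM2)
    (hGA : IsGreen n (tildeCoef T a) (2 * T) (XA n (2 * T)) GA)
    (σ : ℝ → ℝ) (hσ : IntervalIntegrable σ volume 0 T) :
    ∀ t ∈ Icc (0:ℝ) T, (∫ s in (0:ℝ)..T, GM2 t s * σ s)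
      = (∫ s in (0:ℝ)..T, GA t s * σ s) + ∫ s in (0:ℝ)..T, GA (2*T - t) s * σ s := by
  classical
  set σt : ℝ → ℝ := fun s => if s ≤ T then σ s else 0 with hσtdef
  set σh : ℝ → ℝ := fun s => if T < s then σ (2*T - s) else 0 with hσhdef
  set σe : ℝ → ℝ := fun s => σt s + σh s with hσedef
  -- integrability facts
  have hσt01 : IntervalIntegrable σt volume 0 T := by
    have hEq1 : σ =ᵐ[volume.restrict (uIoc (0:ℝ) T)] σt := by
      filter_upwards [ae_restrict_mem measurableSet_uIoc] with x hx
      rw [uIoc_of_le hT.le] at hx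
      simp only [hσtdef]
      rw [if_pos hx.2]
    rw [intervalIntegrable_iff] at hσ ⊢
    exact hσ.congr hEq1
  have hσtT2 : IntervalIntegrable σt volume T (2*T) := by
    have hz : (fun _ : ℝ => (0:ℝ)) =ᵐ[volume.restrict (uIoc T (2*T))] σt := by
      filter_upwards [ae_restrict_mem measurableSet_uIoc] with x hx
      rw [uIoc_of_le (by linarith)] at hx
      simp only [hσtdef]
      rw [if_neg (not_le.mpr hx.1)]
    rw [intervalIntegrable_iff]
    exact (intervalIntegrable_iff.mp (intervalIntegrable_const (c := (0:ℝ)))).congr hz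
  have hσt2T : IntervalIntegrable σt volume 0 (2*T) := hσt01.trans hσtT2
  have hσh01 : IntervalIntegrable σh volume 0 T := by
    have hz : (fun _ : ℝ => (0:ℝ)) =ᵐ[volume.restrict (uIoc (0:ℝ) T)] σh := by
      filter_upwards [ae_restrict_mem measurableSet_uIoc] with x hx
      rw [uIoc_of_le hT.le] at hx
      simp only [hσhdef]
      rw [if_neg (not_lt.mpr hx.2)]
    rw [intervalIntegrable_iff]
    exact (intervalIntegrable_iff.mp (intervalIntegrable_const (c := (0:ℝ)))).congr hz
  have hσhT2 : IntervalIntegrable σh volume T (2*T) := by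
    have hbase : IntervalIntegrable (fun x => σ (2*T - x)) volume T (2*T) := by
      have h := (hσ.comp_sub_left (2*T)).symm
      have e1 : 2*T - (0:ℝ) = 2*T := by ring
      have e2 : 2*T - T = T := by ring
      rw [e1, e2] at h
      exact h
    have hz : (fun x : ℝ => σ (2*T - x)) =ᵐ[volume.restrict (uIoc T (2*T))] σh := by
      filter_upwards [ae_restrict_mem measurableSet_uIoc] with x hx
      rw [uIoc_of_le (by linarith)] at hx
      simp only [hσhdef]
      rw [if_pos hx.1]
    rw [intervalIntegrable_iff]
    exact (intervalIntegrable_iff.mp hbase).congr hz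
  have hσh2T : IntervalIntegrable σh volume 0 (2*T) := hσh01.trans hσhT2
  have hσe2T : IntervalIntegrable σe volume 0 (2*T) := by
    rw [hσedef]; exact hσt2T.add hσh2T
  -- continuity of sections of GA
  have hGAcont : ∀ y ∈ Icc (0:ℝ) (2*T), ContinuousOn (fun s => GA y s) (Icc 0 (2*T)) := by
    intro y hy
    exact hGA.1.comp ((continuous_const.prodMk continuous_id).continuousOn)
      (fun s hs => ⟨hy, hs⟩)
  -- the solution for σe
  obtain ⟨hXAe, haee, huniqe⟩ := hGA.2 σe hσe2T
  set v : ℝ → ℝ := fun x => ∫ s in (0:ℝ)..(2*T), GA x s * σe s with hvdef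
  have hσe_reflect : ∀ t : ℝ, σe (2*T - t) = σe t := by
    intro t
    rcases lt_trichotomy t T with h | h | h
    · simp only [hσedef, hσtdef, hσhdef]
      rw [if_neg (by intro hle; linarith), if_pos (by linarith), if_pos h.le,
        if_neg (by intro hlt; linarith)]
      have e : 2*T - (2*T - t) = t := by ring
      rw [e]; ring
    · rw [h, show 2*T - T = T by ring]
    · simp only [hσedef, hσtdef, hσhdef]
      rw [if_pos (by linarith), if_neg (by intro hlt; linarith),
        if_neg (not_le.mpr h), if_pos h]
      ring
  have hmaps2 : MapsTo (fun x : ℝ => 2*T - x) (Icc 0 (2*T)) (Icc 0 (2*T)) := by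
    intro x hx
    simp only [mem_Icc] at hx ⊢
    constructor <;> linarith [hx.1, hx.2]
  have hXAe' : (fun x => v (2*T - x)) ∈ XA n (2*T) := XA_reflect hn (by linarith) hXAe
  have haee' : ∀ᵐ t ∂volume, t ∈ Icc (0:ℝ) (2*T) →
      Lop n (tildeCoef T a) (fun x => v (2*T - x)) t = σe t := by
    filter_upwards [ae_reflect (c := 2*T) haee, ae_ne_point T] with t h1 h2 hmem
    have hmem' : 2*T - t ∈ Icc (0:ℝ) (2*T) := hmaps2 hmem
    rw [Lop_reflect n T a v h2, h1 hmem', hσe_reflect t]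
  have hveq : ∀ x ∈ Icc (0:ℝ) (2*T), v (2*T - x) = v x := by
    intro x hx
    exact huniqe (fun y => v (2*T - y)) hXAe' haee' x hx
  have hMemW := hXAe.1
  have hderiv : ∀ k, k < 2*n → ∀ x ∈ Icc (0:ℝ) (2*T),
      iteratedDeriv k v x = (-1:ℝ)^k * iteratedDeriv k v (2*T - x) := by
    intro k hk
    apply eqOn_Icc_of_Ioo (by linarith)
    · exact hMemW.1 k hk
    · exact continuousOn_const.mul
        ((hMemW.1 k hk).comp (continuousOn_const.sub continuousOn_id) hmaps2)
    · intro x hx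
      have h1 : ∀ y ∈ Ioo (0:ℝ) (2*T), v y = (fun z => v (2*T - z)) y :=
        fun y hy => (hveq y (Ioo_subset_Icc_self hy)).symm
      have h2 := iteratedDeriv_eqOn_Ioo h1 k x hx
      rw [h2, reflect_iteratedDeriv]
  have hvM2 : v ∈ XM2 n T := by
    refine ⟨⟨?_, ?_, ?_⟩, ?_⟩
    · intro k hk
      exact (hMemW.1 k hk).mono (Icc_subset_Icc le_rfl (by linarith))
    · apply hMemW.2.1.mono_set
      rw [uIcc_of_le hT.le, uIcc_of_le (by linarith : (0:ℝ) ≤ 2*T)]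
      exact Icc_subset_Icc le_rfl (by linarith)
    · intro x hx
      exact hMemW.2.2 x ⟨hx.1, by linarith [hx.2]⟩
    · intro k hk
      constructor
      · have h1 := hderiv (2*k) (by omega) 0 ⟨le_rfl, by linarith⟩
        have h2 := hXAe.2 (2*k) (by omega)
        rw [Even.neg_one_pow ⟨k, by ring⟩, one_mul, sub_zero] at h1
        linarith
      · have h1 := hderiv (2*k+1) (by omega) T ⟨hT.le, by linarith⟩
        have e : 2*T - T = T := by ring
        rw [e, Odd.neg_one_pow ⟨k, by ring⟩, neg_one_mul] at h1
        linarith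
  have haeT : ∀ᵐ t ∂volume, t ∈ Icc (0:ℝ) T → Lop n a v t = σ t := by
    filter_upwards [haee] with t h1 ht
    have ht2 : t ∈ Icc (0:ℝ) (2*T) := ⟨ht.1, by linarith [ht.2]⟩
    have h2 := h1 ht2
    have hL : Lop n (tildeCoef T a) v t = Lop n a v t := by
      unfold Lop
      congr 1
      apply Finset.sum_congr rfl
      intro k hk
      unfold tildeCoef
      rw [if_pos ht.2]
    have hs2 : σe t = σ t := by
      simp only [hσedef, hσtdef, hσhdef]
      rw [if_pos ht.2, if_neg (not_lt.mpr ht.2), add_zero]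
    rw [← hL, h2, hs2]
  obtain ⟨_, _, huniqM⟩ := hGM2.2 σ hσ
  have hvM : ∀ x ∈ Icc (0:ℝ) T, v x = ∫ s in (0:ℝ)..T, GM2 x s * σ s :=
    huniqM v hvM2 haeT
  -- the solution for σt and its reflection
  obtain ⟨hXA1, hae1, _⟩ := hGA.2 σt hσt2T
  set v₁ : ℝ → ℝ := fun x => ∫ s in (0:ℝ)..(2*T), GA x s * σt s with hv1def
  have hsplit : ∀ y ∈ Icc (0:ℝ) (2*T), v₁ y = ∫ s in (0:ℝ)..T, GA y s * σ s := by
    intro y hy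
    have i1 : IntervalIntegrable (fun s => GA y s * σt s) volume 0 T := by
      apply hσt01.continuousOn_mul
      rw [uIcc_of_le hT.le]
      exact (hGAcont y hy).mono (Icc_subset_Icc le_rfl (by linarith))
    have i2 : IntervalIntegrable (fun s => GA y s * σt s) volume T (2*T) := by
      apply hσtT2.continuousOn_mul
      rw [uIcc_of_le (by linarith : T ≤ 2*T)]
      exact (hGAcont y hy).mono (Icc_subset_Icc (by linarith) le_rfl)
    have e0 : v₁ y = (∫ s in (0:ℝ)..T, GA y s * σt s) + ∫ s in T..(2*T), GA y s * σt s := by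
      simp only [hv1def]
      exact (intervalIntegral.integral_add_adjacent_intervals i1 i2).symm
    have e1 : (∫ s in (0:ℝ)..T, GA y s * σt s) = ∫ s in (0:ℝ)..T, GA y s * σ s := by
      apply intervalIntegral.integral_congr
      intro x hx
      rw [uIcc_of_le hT.le] at hx
      show GA y x * σt x = GA y x * σ x
      simp only [hσtdef]
      rw [if_pos hx.2]
    have e2 : (∫ s in T..(2*T), GA y s * σt s) = 0 := by
      have hz : ∀ᵐ x ∂(volume : Measure ℝ), x ∈ uIoc T (2*T) →
          GA y x * σt x = (fun _ : ℝ => (0:ℝ)) x := by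
        apply Filter.Eventually.of_forall
        intro x hx
        rw [uIoc_of_le (by linarith : T ≤ 2*T)] at hx
        simp only [hσtdef]
        rw [if_neg (not_le.mpr hx.1), mul_zero]
      have := intervalIntegral.integral_congr_ae hz
      simpa using this
    rw [e0, e1, e2, add_zero]
  have hXA1' : (fun x => v₁ (2*T - x)) ∈ XA n (2*T) := XA_reflect hn (by linarith) hXA1
  have hae1' : ∀ᵐ t ∂volume, t ∈ Icc (0:ℝ) (2*T) →
      Lop n (tildeCoef T a) (fun x => v₁ (2*T - x)) t = σh t := by
    filter_upwards [ae_reflect (c := 2*T) hae1, ae_ne_point T] with t h1 h2 hmem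
    have hmem' : 2*T - t ∈ Icc (0:ℝ) (2*T) := hmaps2 hmem
    rw [Lop_reflect n T a v₁ h2, h1 hmem']
    rcases lt_or_gt_of_ne h2 with h | h
    · simp only [hσtdef, hσhdef]
      rw [if_neg (by intro hle; linarith), if_neg (not_lt.mpr h.le)]
    · simp only [hσtdef, hσhdef]
      rw [if_pos (by linarith), if_pos h]
  obtain ⟨_, _, huniqh⟩ := hGA.2 σh hσh2T
  have hv2 : ∀ x ∈ Icc (0:ℝ) (2*T), v₁ (2*T - x) = ∫ s in (0:ℝ)..(2*T), GA x s * σh s :=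
    fun x hx => huniqh (fun y => v₁ (2*T - y)) hXA1' hae1' x hx
  -- assemble
  intro t ht
  have ht2 : t ∈ Icc (0:ℝ) (2*T) := ⟨ht.1, by linarith [ht.2]⟩
  have hrt2 : 2*T - t ∈ Icc (0:ℝ) (2*T) := ⟨by linarith [ht.2], by linarith [ht.1]⟩
  have i1 : IntervalIntegrable (fun s => GA t s * σt s) volume 0 (2*T) := by
    apply hσt2T.continuousOn_mul
    rw [uIcc_of_le (by linarith : (0:ℝ) ≤ 2*T)]
    exact hGAcont t ht2
  have i2 : IntervalIntegrable (fun s => GA t s * σh s) volume 0 (2*T) := by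
    apply hσh2T.continuousOn_mul
    rw [uIcc_of_le (by linarith : (0:ℝ) ≤ 2*T)]
    exact hGAcont t ht2
  have hv_decomp : v t = v₁ t + v₁ (2*T - t) := by
    have e : v t = (∫ s in (0:ℝ)..(2*T), GA t s * σt s)
        + ∫ s in (0:ℝ)..(2*T), GA t s * σh s := by
      simp only [hvdef]
      have e' : (∫ s in (0:ℝ)..(2*T), GA t s * σe s)
          = ∫ s in (0:ℝ)..(2*T), (GA t s * σt s + GA t s * σh s) := by
        apply intervalIntegral.integral_congr
        intro x hx
        show GA t x * σe x = GA t x * σt x + GA t x * σh x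
        simp only [hσedef]
        ring
      rw [e', intervalIntegral.integral_add i1 i2]
    rw [e]
    congr 1
    exact (hv2 t ht2).symm
  rw [← hvM t ht, hv_decomp, hsplit t ht2, hsplit (2*T - t) hrt2]

theorem green_mixed2_antiperiodic (n : ℕ) (hn : 1 ≤ n) (T : ℝ) (hT : 0 < T)
    (a : ℕ → ℝ → ℝ) (ha : ∀ k < 2 * n, IntervalIntegrable (a k) volume 0 T)
    (GM2 GA : ℝ → ℝ → ℝ)
    (hM2res : Nonresonant n a T (XM2 n T))
    (hGM2 : IsGreen n a T (XM2 n T) GM2)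
    (hAres : Nonresonant n (tildeCoef T a) (2 * T) (XA n (2 * T)))
    (hGA : IsGreen n (tildeCoef T a) (2 * T) (XA n (2 * T)) GA) :
    ∀ t ∈ Icc 0 T, ∀ s ∈ Icc 0 T,
      GM2 t s = GA t s + GA (2 * T - t) s := by
  intro t ht s hs
  set D : ℝ → ℝ := fun x => GM2 t x - GA t x - GA (2*T - t) x with hDdef
  have ht2 : t ∈ Icc (0:ℝ) (2*T) := ⟨ht.1, by linarith [ht.2]⟩
  have hrt2 : 2*T - t ∈ Icc (0:ℝ) (2*T) := ⟨by linarith [ht.2], by linarith [ht.1]⟩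
  have hGM2c : ContinuousOn (fun x => GM2 t x) (Icc 0 T) :=
    hGM2.1.comp ((continuous_const.prodMk continuous_id).continuousOn)
      (fun x hx => ⟨ht, hx⟩)
  have hGAc : ∀ y ∈ Icc (0:ℝ) (2*T), ContinuousOn (fun x => GA y x) (Icc 0 T) := fun y hy =>
    hGA.1.comp ((continuous_const.prodMk continuous_id).continuousOn)
      (fun x hx => ⟨hy, mem_Icc.mpr ⟨hx.1, by show x ≤ 2*T; linarith [hx.2]⟩⟩)
  have hDc : ContinuousOn D (Icc 0 T) := by
    rw [hDdef]
    exact (hGM2c.sub (hGAc t ht2)).sub (hGAc _ hrt2)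
  have hDint : IntervalIntegrable D volume 0 T := by
    apply ContinuousOn.intervalIntegrable
    rw [uIcc_of_le hT.le]
    exact hDc
  have key := green_key n hn T hT a GM2 GA hGM2 hGA D hDint t ht
  have hint1 : IntervalIntegrable (fun x => GM2 t x * D x) volume 0 T := by
    apply hDint.continuousOn_mul
    rw [uIcc_of_le hT.le]; exact hGM2c
  have hint2 : IntervalIntegrable (fun x => GA t x * D x) volume 0 T := by
    apply hDint.continuousOn_mul
    rw [uIcc_of_le hT.le]; exact hGAc t ht2
  have hint3 : IntervalIntegrable (fun x => GA (2*T - t) x * D x) volume 0 T := by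
    apply hDint.continuousOn_mul
    rw [uIcc_of_le hT.le]; exact hGAc _ hrt2
  have hz : (∫ x in (0:ℝ)..T, D x * D x) = 0 := by
    have e : (∫ x in (0:ℝ)..T, D x * D x)
        = (∫ x in (0:ℝ)..T, GM2 t x * D x)
          - ∫ x in (0:ℝ)..T, (GA t x * D x + GA (2*T - t) x * D x) := by
      rw [← intervalIntegral.integral_sub hint1 (hint2.add hint3)]
      apply intervalIntegral.integral_congr
      intro x hx
      show D x * D x = GM2 t x * D x - (GA t x * D x + GA (2*T - t) x * D x)
      simp only [hDdef]
      ring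
    rw [e, intervalIntegral.integral_add hint2 hint3, key, sub_self]
  have hDDint : IntervalIntegrable (fun x => D x * D x) volume 0 T := by
    apply hDint.continuousOn_mul
    rw [uIcc_of_le hT.le]; exact hDc
  have hae0 : (fun x => D x * D x) =ᵐ[volume.restrict (Ioc (0:ℝ) T)] 0 :=
    (intervalIntegral.integral_eq_zero_iff_of_le_of_nonneg_ae hT.le
      (Filter.Eventually.of_forall fun x => mul_self_nonneg (D x)) hDDint).mp hz
  have hDs : D s = 0 := by
    by_contra hne
    have hpos : 0 < D s * D s := mul_self_pos.mpr hne
    have hcw : ContinuousWithinAt (fun x => D x * D x) (Icc 0 T) s :=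
      (hDc.mul hDc) s hs
    have hev : ∀ᶠ x in nhdsWithin s (Icc 0 T), 0 < D x * D x :=
      hcw.eventually (eventually_gt_nhds hpos)
    obtain ⟨ε, hε, hball⟩ := Metric.mem_nhdsWithin_iff.mp hev
    set α := max 0 (s - ε/2) with hαdef
    set β := min T (s + ε/2) with hβdef
    have hαβ : α < β := by
      rw [hαdef, hβdef]
      simp only [lt_min_iff, max_lt_iff]
      refine ⟨⟨hT, by linarith [hs.2]⟩, ⟨by linarith [hs.1], by linarith⟩⟩
    have hα0 : (0:ℝ) ≤ α := le_max_left _ _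
    have hβT : β ≤ T := min_le_left _ _
    have hsub : Ioo α β ⊆ {x | 0 < D x * D x} := by
      intro x hx
      apply hball
      constructor
      · rw [Metric.mem_ball, Real.dist_eq]
        have h1 : s - ε/2 ≤ α := le_max_right _ _
        have h2 : β ≤ s + ε/2 := min_le_right _ _
        rw [abs_lt]
        constructor <;> [linarith [hx.1]; linarith [hx.2]]
      · exact ⟨le_trans hα0 hx.1.le, le_trans hx.2.le hβT⟩
    have h0 : (volume.restrict (Ioc (0:ℝ) T)) {x | ¬ D x * D x = 0} = 0 := by
      have h := hae0
      rw [Filter.EventuallyEq, ae_iff] at h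
      simpa using h
    have hsub2 : Ioo α β ⊆ {x | ¬ D x * D x = 0} := fun x hx => (hsub hx).ne'
    have hle : (volume.restrict (Ioc (0:ℝ) T)) (Ioo α β) = 0 :=
      le_antisymm (h0 ▸ measure_mono hsub2) zero_le
    have heq : (volume.restrict (Ioc (0:ℝ) T)) (Ioo α β) = ENNReal.ofReal (β - α) := by
      rw [Measure.restrict_apply measurableSet_Ioo]
      have hinter : Ioo α β ∩ Ioc 0 T = Ioo α β :=
        inter_eq_left.mpr (fun x hx => ⟨lt_of_le_of_lt hα0 hx.1, le_trans hx.2.le hβT⟩)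
      rw [hinter, Real.volume_Ioo]
    rw [heq] at hle
    have := ENNReal.ofReal_eq_zero.mp hle
    linarith
  simp only [hDdef] at hDs
  linarith
end
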